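/- The limit as real x → ∞ of K(x)/Γ(x) equals 1, where K(x) = ∫₀^∞ e^{-t} (t^x - 1)/(t - 1) dt. -/

import Mathlib

open MeasureTheory Filter Topology

/-- Integrand of Kurepa's function, extended by continuity at `t = 1`. -/
noncomputable def kurepaIntegrand (x t : ℝ) : ℝ :=
  if t = 1 then x * Real.exp (-1) else Real.exp (-t) * (t ^ x - 1) / (t - 1)

/-- Kurepa's function `K(x) = ∫₀^∞ e^{-t} (t^x - 1)/(t-1) dt`. -/
noncomputable def kurepaK (x : ℝ) : ℝ := ∫ t in Set.Ioi (0 : ℝ), kurepaIntegrand x t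

/-!
Splitting off the top power, `(t^x - 1)/(t - 1) = (t^(x-1) - 1)/(t - 1) + t^(x-1)`, so Kurepa's
function satisfies `K(x) = K(x-1) + Γ(x)` and `K(x)/Γ(x) - 1 = K(x-1)/((x-1) Γ(x-1))`.
Convexity of `t ↦ t^x` (Bernoulli's inequality at `t` and at `1/t`) bounds the quotient
`(t^x - 1)/(t - 1)` by `x (1 + t^(x-1))`, whence `K(x) ≤ x (1 + Γ(x)) ≤ 2 Γ(x+1)` once `Γ(x) ≥ 1`.
One more step of the recursion gives `K(x-1) ≤ 3 Γ(x-1)`, so `0 ≤ K(x)/Γ(x) - 1 ≤ 3/(x-1)`.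
-/

open Real Set

namespace Real

lemma rpow_sub_one_le_mul_rpow_sub_one_mul {t x : ℝ} (ht : 0 < t) (hx : 1 ≤ x) :
    t ^ x - 1 ≤ x * t ^ (x - 1) * (t - 1) := by
  have hb := one_add_mul_self_le_rpow_one_add (s := t⁻¹ - 1) (by linarith [inv_pos.2 ht]) hx
  rw [add_sub_cancel, inv_rpow ht.le] at hb
  have htx : 0 < t ^ x := rpow_pos_of_pos ht x
  have h := mul_le_mul_of_nonneg_left hb htx.le
  rw [mul_inv_cancel₀ htx.ne', mul_add, mul_one] at h
  rw [rpow_sub_one ht.ne', div_eq_mul_inv]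
  linear_combination h - x * t ^ x * mul_inv_cancel₀ ht.ne'

lemma rpow_sub_one_div_sub_one_nonneg {t x : ℝ} (ht : 0 < t) (hx : 1 ≤ x) :
    0 ≤ (t ^ x - 1) / (t - 1) := by
  rcases lt_trichotomy t 1 with h | rfl | h
  · exact div_nonneg_of_nonpos (by linarith [rpow_le_one ht.le h.le (by linarith : 0 ≤ x)])
      (by linarith)
  · simp
  · exact div_nonneg (by linarith [one_le_rpow h.le (by linarith : 0 ≤ x)]) (by linarith)

lemma rpow_sub_one_div_sub_one_le {t x : ℝ} (ht : 0 < t) (hx : 1 ≤ x) :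
    (t ^ x - 1) / (t - 1) ≤ x * (1 + t ^ (x - 1)) := by
  have hpow : 0 ≤ x * t ^ (x - 1) := by positivity
  rcases lt_trichotomy t 1 with h | rfl | h
  · have hA : 1 + x * (t - 1) ≤ t ^ x := by
      simpa using one_add_mul_self_le_rpow_one_add (s := t - 1) (by linarith) hx
    rw [div_le_iff_of_neg (by linarith)]
    nlinarith
  · simp only [one_rpow, sub_self, div_zero]
    positivity
  · rw [div_le_iff₀ (by linarith)]
    nlinarith [rpow_sub_one_le_mul_rpow_sub_one_mul ht hx]

lemma one_le_Gamma {x : ℝ} (hx : 2 ≤ x) : 1 ≤ Gamma x :=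
  Gamma_two ▸ Gamma_strictMonoOn_Ici.monotoneOn (le_refl (2 : ℝ)) hx hx

end Real

lemma integrableOn_exp_neg_add_GammaIntegrand {x : ℝ} (hx : 0 < x) :
    IntegrableOn (fun t => exp (-t) + exp (-t) * t ^ (x - 1)) (Ioi 0) :=
  (integrableOn_exp_neg_Ioi 0).add (GammaIntegral_convergent hx)

lemma integral_exp_neg_add_GammaIntegrand {x : ℝ} (hx : 0 < x) :
    ∫ t in Ioi 0, (exp (-t) + exp (-t) * t ^ (x - 1)) = 1 + Gamma x := by
  rw [integral_add (integrableOn_exp_neg_Ioi 0) (GammaIntegral_convergent hx),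
    integral_exp_neg_Ioi_zero, Gamma_eq_integral hx]

lemma kurepaIntegrand_nonneg {x t : ℝ} (hx : 1 ≤ x) (ht : 0 < t) :
    0 ≤ kurepaIntegrand x t := by
  unfold kurepaIntegrand
  split_ifs
  · positivity
  · rw [mul_div_assoc]
    exact mul_nonneg (exp_pos _).le (rpow_sub_one_div_sub_one_nonneg ht hx)

lemma kurepaIntegrand_le {x t : ℝ} (hx : 1 ≤ x) (ht : 0 < t) :
    kurepaIntegrand x t ≤ x * (exp (-t) + exp (-t) * t ^ (x - 1)) := by
  unfold kurepaIntegrand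
  split_ifs with h
  · subst h
    simp only [one_rpow]
    nlinarith [exp_pos (-1)]
  · calc exp (-t) * (t ^ x - 1) / (t - 1) = exp (-t) * ((t ^ x - 1) / (t - 1)) := mul_div_assoc ..
      _ ≤ exp (-t) * (x * (1 + t ^ (x - 1))) :=
        mul_le_mul_of_nonneg_left (rpow_sub_one_div_sub_one_le ht hx) (exp_pos _).le
      _ = x * (exp (-t) + exp (-t) * t ^ (x - 1)) := by ring

lemma measurable_kurepaIntegrand (x : ℝ) : Measurable (kurepaIntegrand x) := by
  unfold kurepaIntegrand
  exact Measurable.ite (measurableSet_singleton 1) measurable_const (by fun_prop)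

lemma integrableOn_kurepaIntegrand {x : ℝ} (hx : 1 ≤ x) :
    IntegrableOn (kurepaIntegrand x) (Ioi 0) := by
  refine ((integrableOn_exp_neg_add_GammaIntegrand (by linarith)).const_mul x).mono'
    (measurable_kurepaIntegrand x).aestronglyMeasurable ?_
  filter_upwards [ae_restrict_mem measurableSet_Ioi] with t ht
  rw [norm_of_nonneg (kurepaIntegrand_nonneg hx ht)]
  exact kurepaIntegrand_le hx ht

lemma kurepaIntegrand_add_one (x : ℝ) {t : ℝ} (ht : 0 < t) :
    kurepaIntegrand (x + 1) t = kurepaIntegrand x t + exp (-t) * t ^ x := by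
  unfold kurepaIntegrand
  split_ifs with h
  · subst h
    simp only [one_rpow]
    ring
  · have h1 : t - 1 ≠ 0 := sub_ne_zero.mpr h
    rw [rpow_add_one ht.ne']
    field_simp
    ring

lemma kurepaK_add_one {x : ℝ} (hx : 1 ≤ x) : kurepaK (x + 1) = kurepaK x + Gamma (x + 1) := by
  have hΓ : IntegrableOn (fun t => exp (-t) * t ^ x) (Ioi 0) := by
    simpa using GammaIntegral_convergent (s := x + 1) (by linarith)
  rw [kurepaK, kurepaK, Gamma_eq_integral (by linarith), add_sub_cancel_right,
    ← integral_add (integrableOn_kurepaIntegrand hx) hΓ]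
  exact setIntegral_congr_fun measurableSet_Ioi fun t ht => kurepaIntegrand_add_one x ht

lemma kurepaK_nonneg {x : ℝ} (hx : 1 ≤ x) : 0 ≤ kurepaK x :=
  setIntegral_nonneg measurableSet_Ioi fun _ ht => kurepaIntegrand_nonneg hx ht

lemma kurepaK_le_mul_one_add_Gamma {x : ℝ} (hx : 1 ≤ x) : kurepaK x ≤ x * (1 + Gamma x) := by
  have hx₀ : 0 < x := by linarith
  calc kurepaK x ≤ ∫ t in Ioi 0, x * (exp (-t) + exp (-t) * t ^ (x - 1)) := by
        refine setIntegral_mono_on (integrableOn_kurepaIntegrand hx)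
          ((integrableOn_exp_neg_add_GammaIntegrand hx₀).const_mul x) measurableSet_Ioi ?_
        exact fun t ht => kurepaIntegrand_le hx ht
    _ = x * (1 + Gamma x) := by
        rw [integral_const_mul, integral_exp_neg_add_GammaIntegrand hx₀]

lemma kurepaK_le_three_mul_Gamma {x : ℝ} (hx : 3 ≤ x) : kurepaK x ≤ 3 * Gamma x := by
  have hstep := kurepaK_add_one (x := x - 1) (by linarith)
  have hΓ := Gamma_add_one (s := x - 1) (by linarith)
  rw [sub_add_cancel] at hstep hΓ
  have hK := kurepaK_le_mul_one_add_Gamma (x := x - 1) (by linarith)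
  have h1 := one_le_Gamma (x := x - 1) (by linarith)
  nlinarith

lemma kurepaK_div_Gamma_mem_Icc {x : ℝ} (hx : 4 ≤ x) :
    kurepaK x / Gamma x ∈ Icc 1 (1 + 3 / (x - 1)) := by
  obtain ⟨y, rfl⟩ : ∃ y, x = y + 1 := ⟨x - 1, by ring⟩
  have hy : 0 < y := by linarith
  have hratio : kurepaK (y + 1) / Gamma (y + 1) = 1 + kurepaK y / (y * Gamma y) := by
    rw [kurepaK_add_one (by linarith), Gamma_add_one hy.ne']
    field_simp
    ring
  rw [hratio, add_sub_cancel_right]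
  refine ⟨le_add_of_nonneg_right (div_nonneg (kurepaK_nonneg (by linarith)) (by positivity)), ?_⟩
  gcongr 1 + ?_
  rw [div_le_div_iff₀ (by positivity) hy]
  nlinarith [kurepaK_le_three_mul_Gamma (x := y) (by linarith)]

theorem kurepaK_asymp_gamma :
    Tendsto (fun x : ℝ => kurepaK x / Real.Gamma x) atTop (𝓝 1) := by
  have hupper : Tendsto (fun x : ℝ => 1 + 3 / (x - 1)) atTop (𝓝 1) := by
    simpa [sub_eq_add_neg] using tendsto_const_nhds.add
      (tendsto_const_nhds.div_atTop (tendsto_atTop_add_const_right _ (-1 : ℝ) tendsto_id))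
  have hbounds := (eventually_ge_atTop 4).mono fun x hx => kurepaK_div_Gamma_mem_Icc hx
  exact tendsto_of_tendsto_of_tendsto_of_le_of_le' tendsto_const_nhds hupper
    (hbounds.mono fun _ h => h.1) (hbounds.mono fun _ h => h.2)
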